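/- Fix μ > 0 and y with 0 < y < μ + 1. Then Q_μ(x,y) is a strictly concave function of x on (0,∞), i.e., ∂²Q_μ(x,y)/∂x² < 0 for all x > 0. -/

import Mathlib

open Real MeasureTheory Set Filter

/-- Modified Bessel function of the first kind `I_ν(z)` (for positive real argument),
defined by its Maclaurin-type series. -/
noncomputable def besselI (ν z : ℝ) : ℝ :=
  ∑' n : ℕ, (z / 2) ^ (ν + 2 * (n : ℝ)) / ((Nat.factorial n : ℝ) * Real.Gamma (ν + (n : ℝ) + 1))

/-- Generalized Marcum Q-function. -/
noncomputable def marcumQ (μ x y : ℝ) : ℝ :=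
  x ^ ((1 - μ) / 2) *
    ∫ t in Set.Ioi y, t ^ ((μ - 1) / 2) * Real.exp (-t - x) * besselI (μ - 1) (2 * Real.sqrt (x * t))

/-- Complementary generalized Marcum P-function. -/
noncomputable def marcumP (μ x y : ℝ) : ℝ :=
  x ^ ((1 - μ) / 2) *
    ∫ t in Set.Ioc (0 : ℝ) y, t ^ ((μ - 1) / 2) * Real.exp (-t - x) * besselI (μ - 1) (2 * Real.sqrt (x * t))

/-!
Expanding `I_{μ-1}` in its series and integrating term by term gives
`Q_μ(x, y) = e^{-x} ∑ₙ gₙ xⁿ / n!` with `gₙ = Q(μ + n, y)`, the regularized upper incomplete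
gamma function. Differentiating such a Poisson mean replaces `g` by its forward difference, and
`Δgₙ = y^{μ+n} e^{-y} / Γ(μ + n + 1)` is positive with `Δgₙ₊₁ / Δgₙ = y / (μ + n + 1) < 1`
when `y < μ + 1`. Hence `∂²Q_μ/∂x² = e^{-x} ∑ₙ Δ²gₙ xⁿ / n! < 0` for `x > 0`.
-/

open scoped Nat fwdDiff Topology

noncomputable def egf (a : ℕ → ℝ) (x : ℝ) : ℝ := ∑' n, a n * x ^ n / n !

/-- The mean of `a N` for a Poisson random variable `N` of parameter `x`. -/
noncomputable def poissonMean (a : ℕ → ℝ) (x : ℝ) : ℝ := exp (-x) * egf a x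

theorem mul_natCast_succ_mul_pow_div_factorial_succ (b x : ℝ) (n : ℕ) :
    b * (((n + 1 : ℕ) : ℝ) * x ^ n) / (n + 1)! = b * x ^ n / n ! := by
  rw [Nat.factorial_succ, Nat.cast_mul]
  field_simp

section PoissonMean

variable {a : ℕ → ℝ} {C : ℝ}

theorem summable_egf (hC : ∀ n, |a n| ≤ C) (x : ℝ) : Summable fun n => a n * x ^ n / n ! := by
  refine .of_norm_bounded ((Real.summable_pow_div_factorial |x|).mul_left C) fun n => ?_
  rw [norm_div, norm_mul, norm_pow, Real.norm_natCast, Real.norm_eq_abs, Real.norm_eq_abs,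
    mul_div_assoc]
  gcongr
  exact hC n

theorem egf_fwdDiff (hC : ∀ n, |a n| ≤ C) (x : ℝ) :
    egf (Δ_[1] a) x = egf (fun n => a (n + 1)) x - egf a x := by
  rw [egf, egf, egf, ← (summable_egf (fun n => hC (n + 1)) x).tsum_sub (summable_egf hC x)]
  exact tsum_congr fun n => by rw [fwdDiff]; ring

theorem abs_fwdDiff_le (hC : ∀ n, |a n| ≤ C) (n : ℕ) : |Δ_[1] a n| ≤ C + C :=
  (abs_sub _ _).trans (add_le_add (hC (n + 1)) (hC n))

theorem hasDerivAt_egf (hC : ∀ n, |a n| ≤ C) (x : ℝ) :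
    HasDerivAt (egf a) (egf (fun n => a (n + 1)) x) x := by
  set R := |x| + 1
  have hxR : x ∈ Metric.ball (0 : ℝ) R := by simp [R]
  have hC0 : 0 ≤ C := (abs_nonneg _).trans (hC 0)
  have hterm : ∀ n z, z ∈ Metric.ball (0 : ℝ) R →
      HasDerivAt (fun z => a n * z ^ n / n !) (a n * (n * z ^ (n - 1)) / n !) z :=
    fun n z _ => ((hasDerivAt_pow n z).const_mul (a n)).div_const _
  have hbound : ∀ n z, z ∈ Metric.ball (0 : ℝ) R →
      ‖a n * (n * z ^ (n - 1)) / (n ! : ℝ)‖ ≤ C * (n * R ^ (n - 1)) / n ! := by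
    intro n z hz
    have hzR : |z| ≤ R := by simpa using (Metric.mem_ball.mp hz).le
    rw [norm_div, norm_mul, norm_mul, norm_pow, Real.norm_natCast, Real.norm_natCast,
      Real.norm_eq_abs, Real.norm_eq_abs]
    gcongr
    exact hC n
  have hsum : Summable fun n : ℕ => C * (n * R ^ (n - 1)) / n ! := by
    refine (summable_nat_add_iff 1).mp ?_
    simpa only [Nat.add_sub_cancel, mul_natCast_succ_mul_pow_div_factorial_succ, ← mul_div_assoc]
      using (Real.summable_pow_div_factorial R).mul_left C
  refine (hasDerivAt_tsum_of_isPreconnected hsum Metric.isOpen_ball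
    (convex_ball (0 : ℝ) R).isPreconnected hterm hbound hxR (summable_egf hC x) hxR).congr_deriv ?_
  rw [tsum_eq_zero_add' (by simpa only [Nat.add_sub_cancel,
    mul_natCast_succ_mul_pow_div_factorial_succ] using summable_egf (fun n => hC (n + 1)) x)]
  simp only [egf, Nat.cast_zero, zero_mul, mul_zero, zero_div, zero_add, Nat.add_sub_cancel,
    mul_natCast_succ_mul_pow_div_factorial_succ]

theorem hasDerivAt_poissonMean (hC : ∀ n, |a n| ≤ C) (x : ℝ) :
    HasDerivAt (poissonMean a) (poissonMean (Δ_[1] a) x) x := by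
  refine ((hasDerivAt_neg x).exp.mul (hasDerivAt_egf hC x)).congr_deriv ?_
  rw [poissonMean, egf_fwdDiff hC]
  ring

theorem deriv_deriv_poissonMean (hC : ∀ n, |a n| ≤ C) :
    deriv (deriv (poissonMean a)) = poissonMean (Δ_[1] (Δ_[1] a)) := by
  rw [funext fun x => (hasDerivAt_poissonMean hC x).deriv]
  exact funext fun x => (hasDerivAt_poissonMean (abs_fwdDiff_le hC) x).deriv

theorem poissonMean_neg (hC : ∀ n, |a n| ≤ C) (ha : ∀ n, a n < 0) {x : ℝ} (hx : 0 ≤ x) :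
    poissonMean a x < 0 := by
  refine mul_neg_of_pos_of_neg (exp_pos _) ?_
  have hterm : ∀ n, a n * x ^ n / n ! ≤ 0 := fun n =>
    div_nonpos_of_nonpos_of_nonneg (mul_nonpos_of_nonpos_of_nonneg (ha n).le (by positivity))
      (by positivity)
  simpa [egf] using
    (summable_egf hC x).tsum_lt_tsum (i := 0) hterm (by simpa using ha 0) summable_zero

theorem strictConcaveOn_poissonMean (hC : ∀ n, |a n| ≤ C) (ha : ∀ n, Δ_[1] (Δ_[1] a) n < 0) :
    StrictConcaveOn ℝ (Ici 0) (poissonMean a) := by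
  have hcont : Continuous (poissonMean a) :=
    continuous_iff_continuousAt.mpr fun x => (hasDerivAt_poissonMean hC x).continuousAt
  refine strictConcaveOn_of_deriv2_neg' (convex_Ici 0) hcont.continuousOn fun x hx => ?_
  rw [Function.iterate_succ_apply, Function.iterate_one, deriv_deriv_poissonMean hC]
  exact poissonMean_neg (abs_fwdDiff_le (abs_fwdDiff_le hC)) ha hx

end PoissonMean

noncomputable def upperIncGamma (s y : ℝ) : ℝ := ∫ t in Ioi y, exp (-t) * t ^ (s - 1)

noncomputable def regUpperIncGamma (s y : ℝ) : ℝ := upperIncGamma s y / Gamma s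

section IncGamma

variable {s y : ℝ}

theorem integrableOn_upperIncGamma (hy : 0 ≤ y) (hs : 0 < s) :
    IntegrableOn (fun t => exp (-t) * t ^ (s - 1)) (Ioi y) :=
  (GammaIntegral_convergent hs).mono_set (Ioi_subset_Ioi hy)

theorem upperIncGamma_nonneg (hy : 0 ≤ y) : 0 ≤ upperIncGamma s y :=
  setIntegral_nonneg measurableSet_Ioi fun t ht => by
    have : 0 < t := hy.trans_lt ht
    positivity

theorem upperIncGamma_le_Gamma (hy : 0 ≤ y) (hs : 0 < s) : upperIncGamma s y ≤ Gamma s := by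
  rw [Gamma_eq_integral hs]
  refine setIntegral_mono_set (GammaIntegral_convergent hs) ?_
    (Ioi_subset_Ioi hy).eventuallyLE
  filter_upwards [ae_restrict_mem measurableSet_Ioi] with t (ht : 0 < t)
  positivity

theorem upperIncGamma_add_one (hy : 0 < y) (hs : 0 < s) :
    upperIncGamma (s + 1) y = s * upperIncGamma s y + y ^ s * exp (-y) := by
  have hderiv : ∀ t ∈ Ici y, HasDerivAt (fun t => -(t ^ s * exp (-t)))
      (exp (-t) * t ^ (s + 1 - 1) - s * (exp (-t) * t ^ (s - 1))) t := by
    intro t ht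
    have := ((hasDerivAt_rpow_const (p := s) (Or.inl (hy.trans_le ht).ne')).mul
      (hasDerivAt_neg t).exp).neg
    exact this.congr_deriv (by rw [add_sub_cancel_right]; ring)
  have hlim : Tendsto (fun t => -(t ^ s * exp (-t))) atTop (𝓝 0) := by
    simpa using (tendsto_rpow_mul_exp_neg_mul_atTop_nhds_zero s 1 one_pos).neg
  have hint := integrableOn_upperIncGamma hy.le hs
  have h := integral_Ioi_of_hasDerivAt_of_tendsto' hderiv
    ((integrableOn_upperIncGamma hy.le (by linarith)).sub (hint.const_mul s)) hlim
  rw [integral_sub (integrableOn_upperIncGamma hy.le (by linarith)) (hint.const_mul s),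
    integral_const_mul] at h
  rw [upperIncGamma, upperIncGamma]
  linarith

theorem abs_regUpperIncGamma_le_one (hy : 0 ≤ y) (hs : 0 < s) : |regUpperIncGamma s y| ≤ 1 := by
  have hΓ := Gamma_pos_of_pos hs
  rw [regUpperIncGamma, abs_of_nonneg (div_nonneg (upperIncGamma_nonneg hy) hΓ.le), div_le_one hΓ]
  exact upperIncGamma_le_Gamma hy hs

theorem regUpperIncGamma_add_one_sub (hy : 0 < y) (hs : 0 < s) :
    regUpperIncGamma (s + 1) y - regUpperIncGamma s y = y ^ s * exp (-y) / Gamma (s + 1) := by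
  have hΓ := (Gamma_pos_of_pos hs).ne'
  rw [regUpperIncGamma, regUpperIncGamma, upperIncGamma_add_one hy hs, Gamma_add_one hs.ne']
  field_simp
  ring

theorem fwdDiff_fwdDiff_regUpperIncGamma_neg {μ : ℝ} (hμ : 0 < μ) (hy : 0 < y) (hyμ : y < μ + 1)
    (n : ℕ) : Δ_[1] (Δ_[1] fun n : ℕ => regUpperIncGamma (μ + n) y) n < 0 := by
  have hΔ : ∀ m : ℕ, Δ_[1] (fun n : ℕ => regUpperIncGamma (μ + n) y) m
      = y ^ (μ + m) * exp (-y) / Gamma (μ + m + 1) := fun m => by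
    rw [fwdDiff, Nat.cast_add_one, ← add_assoc, regUpperIncGamma_add_one_sub hy (by positivity)]
  have hΓ := Gamma_pos_of_pos (by positivity : 0 < μ + n + 1)
  have hA : 0 < y ^ (μ + n) * exp (-y) * Gamma (μ + n + 1) := by positivity
  have hyn : y < μ + n + 1 := by linarith [(Nat.cast_nonneg n : (0 : ℝ) ≤ n)]
  rw [fwdDiff, hΔ, hΔ, Nat.cast_add_one, ← add_assoc, rpow_add_one hy.ne',
    Gamma_add_one (by positivity : μ + n + 1 ≠ 0), sub_neg, div_lt_div_iff₀ (by positivity) hΓ]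
  calc y ^ (μ + n) * y * exp (-y) * Gamma (μ + n + 1)
      = y ^ (μ + n) * exp (-y) * Gamma (μ + n + 1) * y := by ring
    _ < y ^ (μ + n) * exp (-y) * Gamma (μ + n + 1) * (μ + n + 1) := mul_lt_mul_of_pos_left hyn hA
    _ = y ^ (μ + n) * exp (-y) * ((μ + n + 1) * Gamma (μ + n + 1)) := by ring

end IncGamma

theorem marcumQ_integrand_eq_tsum (μ : ℝ) {x t : ℝ} (hx : 0 < x) (ht : 0 < t) :
    x ^ ((1 - μ) / 2) * (t ^ ((μ - 1) / 2) * exp (-t - x) * besselI (μ - 1) (2 * √(x * t)))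
      = ∑' n : ℕ, exp (-x) * x ^ n / n ! * (exp (-t) * t ^ (μ + n - 1) / Gamma (μ + n)) := by
  rw [besselI, ← tsum_mul_left, ← tsum_mul_left]
  refine tsum_congr fun n => ?_
  have hpow : (2 * √(x * t) / 2) ^ (μ - 1 + 2 * (n : ℝ))
      = x ^ ((μ - 1) / 2) * x ^ n * (t ^ (μ + n - 1) / t ^ ((μ - 1) / 2)) := by
    rw [mul_div_cancel_left₀ _ two_ne_zero, sqrt_eq_rpow, ← rpow_mul (by positivity),
      mul_rpow hx.le ht.le, ← rpow_sub ht, ← rpow_natCast, ← rpow_add hx]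
    ring_nf
  have hx1 : x ^ ((1 - μ) / 2) * x ^ ((μ - 1) / 2) = 1 := by
    rw [← rpow_add hx, show (1 - μ) / 2 + (μ - 1) / 2 = 0 by ring, rpow_zero]
  rw [hpow, show μ - 1 + n + 1 = μ + n by ring, show -t - x = -t + -x by ring, exp_add]
  have ht1 : t ^ ((μ - 1) / 2) / t ^ ((μ - 1) / 2) = 1 := div_self (by positivity)
  linear_combination (exp (-t) * exp (-x) * x ^ n * t ^ (μ + n - 1) / (n ! * Gamma (μ + n)))
    * (t ^ ((μ - 1) / 2) / t ^ ((μ - 1) / 2) * hx1 + ht1)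

theorem marcumQ_eq_poissonMean {μ x y : ℝ} (hμ : 0 < μ) (hy : 0 ≤ y) (hx : 0 < x) :
    marcumQ μ x y = poissonMean (fun n => regUpperIncGamma (μ + n) y) x := by
  set w : ℕ → ℝ := fun n => exp (-x) * x ^ n / (n ! : ℝ)
  set F : ℕ → ℝ → ℝ := fun n t => w n * (exp (-t) * t ^ (μ + n - 1) / Gamma (μ + n))
  have hF_int : ∀ n, Integrable (F n) (volume.restrict (Ioi y)) := fun n =>
    ((integrableOn_upperIncGamma hy (by positivity)).div_const _).const_mul _
  have hF_integral : ∀ n, ∫ t in Ioi y, F n t = w n * regUpperIncGamma (μ + n) y := fun n => by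
    rw [integral_const_mul, integral_div, regUpperIncGamma, upperIncGamma]
  have hF_norm : ∀ n, ∫ t in Ioi y, ‖F n t‖ = w n * regUpperIncGamma (μ + n) y := fun n => by
    rw [← hF_integral]
    refine setIntegral_congr_fun measurableSet_Ioi fun t (ht : y < t) => norm_of_nonneg ?_
    have : 0 < t := hy.trans_lt ht
    have := Gamma_pos_of_pos (by positivity : 0 < μ + n)
    positivity
  have hF_summable : Summable fun n => ∫ t in Ioi y, ‖F n t‖ := by
    refine .of_norm_bounded ((summable_pow_div_factorial x).mul_left (exp (-x))) fun n => ?_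
    rw [hF_norm, norm_mul, norm_of_nonneg (by positivity : 0 ≤ w n), norm_eq_abs,
      ← mul_div_assoc]
    exact mul_le_of_le_one_right (by positivity) (abs_regUpperIncGamma_le_one hy (by positivity))
  calc marcumQ μ x y = ∫ t in Ioi y, ∑' n, F n t := by
        rw [marcumQ, ← integral_const_mul]
        exact setIntegral_congr_fun measurableSet_Ioi fun t ht =>
          marcumQ_integrand_eq_tsum μ hx (hy.trans_lt ht)
    _ = ∑' n, w n * regUpperIncGamma (μ + n) y := by
        rw [← integral_tsum_of_summable_integral_norm hF_int hF_summable]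
        exact tsum_congr hF_integral
    _ = poissonMean (fun n => regUpperIncGamma (μ + n) y) x := by
        rw [poissonMean, egf, ← tsum_mul_left]
        exact tsum_congr fun n => by ring

theorem marcumQ_strict_concave_x (μ y : ℝ) (hμ : 0 < μ) (hy0 : 0 < y) (hy : y < μ + 1) :
    StrictConcaveOn ℝ (Set.Ioi 0) (fun x => marcumQ μ x y) ∧
      ∀ x : ℝ, 0 < x → deriv (deriv (fun x' => marcumQ μ x' y)) x < 0 := by
  set g : ℕ → ℝ := fun n => regUpperIncGamma (μ + n) y
  have hg : ∀ n, |g n| ≤ 1 := fun n => abs_regUpperIncGamma_le_one hy0.le (by positivity)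
  have hg'' : ∀ n, Δ_[1] (Δ_[1] g) n < 0 := fwdDiff_fwdDiff_regUpperIncGamma_neg hμ hy0 hy
  have hQ : EqOn (poissonMean g) (fun x => marcumQ μ x y) (Ioi 0) := fun x hx =>
    (marcumQ_eq_poissonMean hμ hy0.le hx).symm
  refine ⟨((strictConcaveOn_poissonMean hg hg'').subset Ioi_subset_Ici_self
    (convex_Ioi 0)).congr hQ, fun x hx => ?_⟩
  have hQ_nhds : poissonMean g =ᶠ[𝓝 x] fun x => marcumQ μ x y :=
    eventuallyEq_of_mem (isOpen_Ioi.mem_nhds hx) hQ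
  rw [← hQ_nhds.deriv.deriv_eq, deriv_deriv_poissonMean hg]
  exact poissonMean_neg (abs_fwdDiff_le (abs_fwdDiff_le hg)) hg'' hx.le
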